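/- arXiv:2406.09734 — 5 statements merged into one kernel-verified Lean document; each statement's English description precedes it below -/
import Mathlib

section
/- Let β ∈ (0,1), m ∈ (0,1/2), b > 0 and θ ≥ 0 be real. Then β·(2·m·(b + 1) + θ·(1/2 − m))/(1 − β·(1/2 − m)) ≥ θ·(1 − β·(1/2 + m))/(β·(1/2 + m)) if and only if θ ≤ β²·m·(2·m + 1)·(b + 1)/(1 − β). -/
/-- Friend L's constraint in the full-embracement contract holds iff θ ≤ θ̲. -/
theorem stmt_9 (β m b θ : ℝ) (hβ0 : 0 < β) (hβ1 : β < 1)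
    (hm0 : 0 < m) (hm1 : m < 1/2) (hb : 0 < b) (hθ : 0 ≤ θ) :
    β * (2 * m * (b + 1) + θ * (1/2 - m)) / (1 - β * (1/2 - m))
      ≥ θ * (1 - β * (1/2 + m)) / (β * (1/2 + m))
    ↔ θ ≤ β^2 * m * (2 * m + 1) * (b + 1) / (1 - β) := by
  have h1 : 0 < 1 - β * (1/2 - m) := by nlinarith
  have h2 : 0 < β * (1/2 + m) := by nlinarith
  have h3 : 0 < 1 - β := by linarith
  rw [ge_iff_le, div_le_div_iff₀ h2 h1, le_div_iff₀ h3]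
  constructor <;> intro h <;> nlinarith
end

section
/- For all real β ∈ (0,1) and m ∈ [0,1/2): 2 + β·(2·m + 4·β − (1 − 2·m)·(1 + 2·m)²·β² − 5) > 0. Moreover, at m = 0 this expression equals (2 − β)·(1 − β)². -/
/-- Positivity of the key polynomial expression (eq:pos), and its value at m = 0. -/
theorem stmt_10 :
    (∀ β m : ℝ, 0 < β → β < 1 → 0 ≤ m → m < 1/2 →
      2 + β * (2 * m + 4 * β - (1 - 2 * m) * (1 + 2 * m)^2 * β^2 - 5) > 0) ∧
    (∀ β : ℝ, 0 < β → β < 1 →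
      2 + β * (2 * (0:ℝ) + 4 * β - (1 - 2 * (0:ℝ)) * (1 + 2 * (0:ℝ))^2 * β^2 - 5)
        = (2 - β) * (1 - β)^2) := by
  constructor
  · intro β m hb hb1 hm hm2
    nlinarith [sq_nonneg (1-β), sq_nonneg m, sq_nonneg (β*m), sq_nonneg (1-β*(1+2*m)), mul_nonneg hm hb.le, sq_nonneg (β-1), mul_nonneg (mul_nonneg hm hm) hb.le]
  · intro β hb hb1; ring
end

section
/- Let β ∈ (0,1), m ∈ (0,1/2), b > 0 be real and set p := 1/2 + m. Suppose real numbers α_P, α_L, ŷ_L, ŷ_R satisfy the four equations: α_P = −(p·ŷ_L + (1 − p))/(1 − β); b − ŷ_L + β·(α_P + p·b/(1 − β)) = b + β·α_L; α_L = ((1 − p)·b − p·ŷ_R)/(1 − β); and −p·ŷ_R + β·α_P = α_P. Then ŷ_L = 2·β·m·b/(1 − β), α_L = α_P + (1/2 − m)·b/(1 − β), and α_P = −(1 − β − 2·m + 2·(1 + b)·β·m + 4·b·β·m²)/(2·(1 − β)²). -/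
/-- The linear system for the principal's worst punishment payoff (θ = 0, no commitment). -/
theorem stmt_16 (β m b : ℝ) (hβ0 : 0 < β) (hβ1 : β < 1)
    (hm0 : 0 < m) (hm1 : m < 1/2) (hb : 0 < b)
    (p : ℝ) (hp : p = 1/2 + m)
    (αP αL yL yR : ℝ)
    (h1 : αP = -(p * yL + (1 - p)) / (1 - β))
    (h2 : b - yL + β * (αP + p * b / (1 - β)) = b + β * αL)
    (h3 : αL = ((1 - p) * b - p * yR) / (1 - β))
    (h4 : -p * yR + β * αP = αP) :
    yL = 2 * β * m * b / (1 - β) ∧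
    αL = αP + (1/2 - m) * b / (1 - β) ∧
    αP = -(1 - β - 2 * m + 2 * (1 + b) * β * m + 4 * b * β * m^2) / (2 * (1 - β)^2) := by
  have hβ : (1 : ℝ) - β ≠ 0 := by linarith
  subst hp
  field_simp at h1 h2 h3
  refine ⟨?_, ?_, ?_⟩
  · rw [eq_div_iff hβ]
    linear_combination (-1/2 : ℝ) * h2 + (-β/2) * h3 + (-β) * h4
  · have h5 : (1/2 - m) * b / (1 - β) = αL - αP := by
      rw [div_eq_iff hβ]
      linear_combination (-1/2 : ℝ) * h3 - h4
    linarith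
  · have hD : (2 * (1 - β)^2 : ℝ) ≠ 0 := by positivity
    rw [eq_div_iff hD]
    linear_combination (1 - β) * h1 + ((1 + 2*m)/2) * h2 + ((1 + 2*m)*β/2) * h3 + (1 + 2*m)*β * h4
end

section
/- Let β ∈ (0,1), m ∈ (0,1/2), b > 0 be real and define W : ℝ → ℝ by W(s) := −(1/2 + s)·(1 − β·(1/2 + m) − b·β·(m + s))/(1 − (1/2 − s)·β). Then W is differentiable at s = −m with W′(−m) = −1 + β·(b + 1)·(1/2 − m)/(1 − β·(1/2 + m)); consequently W′(−m) ≤ 0 if and only if b ≤ (1 − β)/(β·(1/2 − m)). -/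
/-
At s = −m the denominator 1 − (1/2 − s)β and the second factor of the numerator both equal
K = 1 − β(1/2 + m) > 0, so the quotient rule collapses to W′(−m) = −1 + β(b + 1)(1/2 − m)/K.
Clearing K, the condition W′(−m) ≤ 0 reads β(b + 1)(1/2 − m) ≤ 1 − β(1/2 + m),
i.e. bβ(1/2 − m) ≤ 1 − β.
-/

lemma one_sub_mul_half_add_pos {β m : ℝ} (hβ0 : 0 < β) (hβ1 : β < 1) (hm1 : m < 1/2) :
    0 < 1 - β * (1/2 + m) := by
  nlinarith

lemma hasDerivAt_stationaryValue_neg (β m b : ℝ) (hK : 1 - β * (1/2 + m) ≠ 0) :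
    HasDerivAt (fun s => -(1/2 + s) * (1 - β * (1/2 + m) - b * β * (m + s))
      / (1 - (1/2 - s) * β)) (-1 + β * (b + 1) * (1/2 - m) / (1 - β * (1/2 + m))) (-m) := by
  have hden_eq : 1 - (1/2 - -m) * β = 1 - β * (1/2 + m) := by ring
  have hnum := ((hasDerivAt_id' (-m)).const_add (1/2)).fun_neg.fun_mul
    ((((hasDerivAt_id' (-m)).const_add m).const_mul (b * β)).const_sub (1 - β * (1/2 + m)))
  have hden := ((hasDerivAt_id' (-m)).const_sub (1/2)).mul_const β |>.const_sub 1
  refine (hnum.fun_div hden (hden_eq ▸ hK)).congr_deriv ?_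
  rw [hden_eq]
  simp only [add_neg_cancel, mul_zero, sub_zero]
  generalize 1 - β * (1/2 + m) = K at hK ⊢
  field_simp
  ring

lemma neg_one_add_div_nonpos_iff {β m b : ℝ} (hK : 0 < 1 - β * (1/2 + m))
    (hc : 0 < β * (1/2 - m)) :
    -1 + β * (b + 1) * (1/2 - m) / (1 - β * (1/2 + m)) ≤ 0
      ↔ b ≤ (1 - β) / (β * (1/2 - m)) := by
  rw [neg_add_nonpos_iff, div_le_one hK, le_div_iff₀ hc]
  constructor <;> intro h <;> linarith

theorem stmt_17_general (β m b : ℝ) (hβ0 : 0 < β) (hβ1 : β < 1)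
    (hm1 : m < 1/2)
    (W : ℝ → ℝ)
    (hW : W = fun s => -(1/2 + s) * (1 - β * (1/2 + m) - b * β * (m + s))
      / (1 - (1/2 - s) * β)) :
    HasDerivAt W (-1 + β * (b + 1) * (1/2 - m) / (1 - β * (1/2 + m))) (-m) ∧
    (-1 + β * (b + 1) * (1/2 - m) / (1 - β * (1/2 + m)) ≤ 0
      ↔ b ≤ (1 - β) / (β * (1/2 - m))) := by
  have hK := one_sub_mul_half_add_pos hβ0 hβ1 hm1
  subst hW
  exact ⟨hasDerivAt_stationaryValue_neg β m b hK.ne',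
    neg_one_add_div_nonpos_iff hK (mul_pos hβ0 (by linarith))⟩

/-- Derivative of the principal's stationary value at s = −m (θ = 0, no commitment),
    and the cutoff b̂ for its sign. -/
theorem stmt_17 (β m b : ℝ) (hβ0 : 0 < β) (hβ1 : β < 1)
    (hm0 : 0 < m) (hm1 : m < 1/2) (hb : 0 < b)
    (W : ℝ → ℝ)
    (hW : W = fun s => -(1/2 + s) * (1 - β * (1/2 + m) - b * β * (m + s))
      / (1 - (1/2 - s) * β)) :
    HasDerivAt W (-1 + β * (b + 1) * (1/2 - m) / (1 - β * (1/2 + m))) (-m) ∧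
    (-1 + β * (b + 1) * (1/2 - m) / (1 - β * (1/2 + m)) ≤ 0
      ↔ b ≤ (1 - β) / (β * (1/2 - m))) :=
  stmt_17_general β m b hβ0 hβ1 hm1 W hW
end

section
/- Let β ∈ (0,1), m ∈ (0,1/2), b > 0 be real and define W : ℝ → ℝ by W(s) := −(1/2 + s)·(1 − β·(1/2 + m) − b·β·(m + s))/(1 − (1/2 − s)·β). Then W is strictly convex on the interval [−m, m]; indeed, for every s ∈ [−m, m] its second derivative equals 2·β·(b + 1)·(1 − β·(1/2 + m))·(1 − β)/(1 − (1/2 − s)·β)³, which is strictly positive. -/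
/-!
Polynomial division of the quadratic numerator by the linear denominator
`D(s) = 1 - (1/2 - s) β = β s + (1 - β/2)` writes
`W(s) = b s + γ + K / D(s)`, where `K` is the numerator evaluated at the root `s = 1/2 - 1/β`
of `D`, namely `K = (b + 1) (1 - β (1/2 + m)) (1 - β) / β`. The affine part does not contribute
to the second derivative, so `W'' = 2 K β² / D³`, which is positive wherever `D > 0`, in particular
on `[-m, m]`.
-/

open Filter Topology Set

section AffineAddDivLinear

variable (α γ K c d : ℝ) {x : ℝ}

theorem hasDerivAt_affine_add_div_linear (hx : c * x + d ≠ 0) :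
    HasDerivAt (fun t => α * t + γ + K / (c * t + d)) (α - K * c / (c * x + d) ^ 2) x := by
  have hlin : HasDerivAt (fun t => c * t + d) c x := by
    simpa using ((hasDerivAt_id x).const_mul c).add_const d
  refine ((((hasDerivAt_id x).const_mul α).add_const γ).add
    ((hasDerivAt_const x K).div hlin hx)).congr_deriv ?_
  ring

theorem hasDerivAt_const_sub_div_linear_sq (hx : c * x + d ≠ 0) :
    HasDerivAt (fun t => α - K * c / (c * t + d) ^ 2) (2 * K * c ^ 2 / (c * x + d) ^ 3) x := by
  have hlin : HasDerivAt (fun t => c * t + d) c x := by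
    simpa using ((hasDerivAt_id x).const_mul c).add_const d
  refine ((hasDerivAt_const x α).sub ((hasDerivAt_const x (K * c)).div (hlin.fun_pow 2)
    (pow_ne_zero 2 hx))).congr_deriv ?_
  field_simp
  ring

theorem deriv_deriv_eq_of_eventuallyEq_affine_add_div_linear {f : ℝ → ℝ} (hx : c * x + d ≠ 0)
    (hf : f =ᶠ[𝓝 x] fun t => α * t + γ + K / (c * t + d)) :
    deriv (deriv f) x = 2 * K * c ^ 2 / (c * x + d) ^ 3 := by
  have hnear : ∀ᶠ t in 𝓝 x, c * t + d ≠ 0 :=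
    (continuous_const.mul continuous_id |>.add continuous_const).continuousAt.eventually_ne hx
  have hderiv : deriv f =ᶠ[𝓝 x] fun t => α - K * c / (c * t + d) ^ 2 :=
    hf.deriv.trans <| hnear.mono fun t ht => (hasDerivAt_affine_add_div_linear α γ K c d ht).deriv
  rw [hderiv.deriv_eq]
  exact (hasDerivAt_const_sub_div_linear_sq α K c d hx).deriv

end AffineAddDivLinear

section StationaryValue

variable {β m b : ℝ}

noncomputable def stationaryValue (β m b s : ℝ) : ℝ :=
  -(1 / 2 + s) * (1 - β * (1 / 2 + m) - b * β * (m + s)) / (1 - (1 / 2 - s) * β)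

theorem stationaryValue_denom_pos (hβ0 : 0 < β) (hβ1 : β < 1) (hm1 : m < 1 / 2)
    {s : ℝ} (hs : -m ≤ s) : 0 < 1 - (1 / 2 - s) * β := by
  nlinarith

theorem stationaryValue_numerator_eq (hβ : β ≠ 0) (s : ℝ) :
    -(1 / 2 + s) * (1 - β * (1 / 2 + m) - b * β * (m + s)) =
      (b * s + (b * β * (1 + m) - (1 - β * (1 / 2 + m)) - b) / β) * (1 - (1 / 2 - s) * β)
        + (b + 1) * (1 - β * (1 / 2 + m)) * (1 - β) / β := by
  field_simp
  ring

theorem stationaryValue_eventuallyEq (hβ : β ≠ 0) {s : ℝ} (hs : 1 - (1 / 2 - s) * β ≠ 0) :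
    stationaryValue β m b =ᶠ[𝓝 s] fun t => b * t + (b * β * (1 + m) - (1 - β * (1 / 2 + m)) - b) / β
        + (b + 1) * (1 - β * (1 / 2 + m)) * (1 - β) / β / (β * t + (1 - β / 2)) := by
  have hnear : ∀ᶠ t in 𝓝 s, 1 - (1 / 2 - t) * β ≠ 0 :=
    ContinuousAt.eventually_ne (by fun_prop) hs
  filter_upwards [hnear] with t ht
  rw [stationaryValue, stationaryValue_numerator_eq hβ, add_div, mul_div_cancel_right₀ _ ht]
  ring

theorem deriv_deriv_stationaryValue (hβ : β ≠ 0) {s : ℝ} (hs : 1 - (1 / 2 - s) * β ≠ 0) :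
    deriv (deriv (stationaryValue β m b)) s
      = 2 * β * (b + 1) * (1 - β * (1 / 2 + m)) * (1 - β) / (1 - (1 / 2 - s) * β) ^ 3 := by
  have hlin : β * s + (1 - β / 2) = 1 - (1 / 2 - s) * β := by ring
  rw [deriv_deriv_eq_of_eventuallyEq_affine_add_div_linear _ _ _ _ _ (hlin ▸ hs)
    (stationaryValue_eventuallyEq hβ hs), hlin]
  field_simp

end StationaryValue

theorem stmt_18_general (β m b : ℝ) (hβ0 : 0 < β) (hβ1 : β < 1)
    (hm1 : m < 1/2) (hb : 0 < b)
    (W : ℝ → ℝ)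
    (hW : W = fun s => -(1/2 + s) * (1 - β * (1/2 + m) - b * β * (m + s))
      / (1 - (1/2 - s) * β)) :
    StrictConvexOn ℝ (Set.Icc (-m) m) W ∧
    ∀ s ∈ Set.Icc (-m) m,
      deriv (deriv W) s
        = 2 * β * (b + 1) * (1 - β * (1/2 + m)) * (1 - β) / (1 - (1/2 - s) * β)^3 ∧
      0 < 2 * β * (b + 1) * (1 - β * (1/2 + m)) * (1 - β) / (1 - (1/2 - s) * β)^3 := by
  replace hW : W = stationaryValue β m b := hW
  subst hW
  have hD : ∀ s ∈ Icc (-m) m, 0 < 1 - (1 / 2 - s) * β := fun s hs =>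
    stationaryValue_denom_pos hβ0 hβ1 hm1 hs.1
  have hpos : ∀ s ∈ Icc (-m) m,
      0 < 2 * β * (b + 1) * (1 - β * (1/2 + m)) * (1 - β) / (1 - (1/2 - s) * β)^3 := by
    intro s hs
    have := hD s hs
    have : 0 < 1 - β * (1 / 2 + m) := by nlinarith
    have : 0 < 1 - β := by linarith
    positivity
  have hW'' := fun s hs => deriv_deriv_stationaryValue (m := m) (b := b) hβ0.ne' (hD s hs).ne'
  refine ⟨strictConvexOn_of_deriv2_pos (convex_Icc _ _) ?_ ?_, fun s hs => ⟨hW'' s hs, hpos s hs⟩⟩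
  · exact ContinuousOn.div (by fun_prop) (by fun_prop) fun s hs => (hD s hs).ne'
  · intro s hs
    rw [interior_Icc] at hs
    have hs' := Ioo_subset_Icc_self hs
    show 0 < deriv (deriv (stationaryValue β m b)) s
    exact hW'' s hs' ▸ hpos s hs'

/-- Strict convexity of the principal's stationary value on [−m, m] (θ = 0, no commitment),
    with an explicit positive second derivative. -/
theorem stmt_18 (β m b : ℝ) (hβ0 : 0 < β) (hβ1 : β < 1)
    (hm0 : 0 < m) (hm1 : m < 1/2) (hb : 0 < b)
    (W : ℝ → ℝ)
    (hW : W = fun s => -(1/2 + s) * (1 - β * (1/2 + m) - b * β * (m + s))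
      / (1 - (1/2 - s) * β)) :
    StrictConvexOn ℝ (Set.Icc (-m) m) W ∧
    ∀ s ∈ Set.Icc (-m) m,
      deriv (deriv W) s
        = 2 * β * (b + 1) * (1 - β * (1/2 + m)) * (1 - β) / (1 - (1/2 - s) * β)^3 ∧
      0 < 2 * β * (b + 1) * (1 - β * (1/2 + m)) * (1 - β) / (1 - (1/2 - s) * β)^3 :=
  stmt_18_general β m b hβ0 hβ1 hm1 hb W hW
end
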